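/- Let P be a real n×n idempotent matrix (P² = P) admitting a decomposition P = Σ_{i=1}^r σ_i u_i v_iᵀ, where σ_i > 0 for all i, {u_1,…,u_r} is an orthonormal family in ℝ^n, and {v_1,…,v_r} is an orthonormal family in ℝ^n. Then v_i · u_j = δ_ij / σ_i for all i, j (in particular v_i · u_i = 1/σ_i), and consequently the vector σ_i u_i − v_i is orthogonal to v_i for every i. -/
import Mathlib


open Matrix

lemma dot_sum' {n r : ℕ} (a : Fin n → ℝ) (f : Fin r → Fin n → ℝ) :
    a ⬝ᵥ ∑ i, f i = ∑ i, a ⬝ᵥ f i := by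
  simp only [dotProduct, Finset.sum_apply, Finset.mul_sum]
  exact Finset.sum_comm

lemma vecMulVec_mulVec' {n : ℕ} (a b x : Fin n → ℝ) :
    (vecMulVec a b).mulVec x = (b ⬝ᵥ x) • a := by
  ext i
  simp [vecMulVec, mulVec, dotProduct, Finset.mul_sum, mul_comm, mul_assoc, mul_left_comm]

/-- For an idempotent matrix `P = Σ σᵢ uᵢ vᵢᵀ` with `σᵢ > 0`
and orthonormal families `u` and `v`, the families are biorthogonal with
`vᵢ·uⱼ = δᵢⱼ/σᵢ`, and `σᵢ uᵢ − vᵢ` is orthogonal to `vᵢ` for every `i`. -/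
theorem svd_of_oblique_projector
    {n r : ℕ} (P : Matrix (Fin n) (Fin n) ℝ)
    (hidem : P * P = P)
    (σ : Fin r → ℝ) (hσ : ∀ i, 0 < σ i)
    (u v : Fin r → Fin n → ℝ)
    (hu : ∀ i j, u i ⬝ᵥ u j = if i = j then (1 : ℝ) else 0)
    (hv : ∀ i j, v i ⬝ᵥ v j = if i = j then (1 : ℝ) else 0)
    (hP : P = ∑ i, σ i • vecMulVec (u i) (v i)) :
    (∀ i j, v i ⬝ᵥ u j = (if i = j then (1 : ℝ) else 0) / σ i) ∧
      (∀ i, (σ i • u i - v i) ⬝ᵥ v i = 0) := by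
  have hmul : ∀ x : Fin n → ℝ, P.mulVec x = ∑ i, (σ i * (v i ⬝ᵥ x)) • u i := by
    intro x
    rw [hP]
    ext j
    simp only [mulVec, dotProduct, Matrix.sum_apply, Matrix.smul_apply, smul_eq_mul,
      vecMulVec_apply, Finset.sum_apply, Pi.smul_apply, Finset.sum_mul, Finset.mul_sum]
    rw [Finset.sum_comm]
    refine Finset.sum_congr rfl fun i _ => Finset.sum_congr rfl fun k _ => by ring
  have hPv : ∀ b, P.mulVec (v b) = σ b • u b := by
    intro b
    rw [hmul]
    rw [Finset.sum_eq_single b]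
    · rw [hv, if_pos rfl, mul_one]
    · intro i _ hib; rw [hv, if_neg hib, mul_zero, zero_smul]
    · intro h; exact absurd (Finset.mem_univ b) h
  have huP : ∀ a (x : Fin n → ℝ), u a ⬝ᵥ P.mulVec x = σ a * (v a ⬝ᵥ x) := by
    intro a x
    rw [hmul]
    rw [dot_sum']
    rw [Finset.sum_eq_single a]
    · rw [dotProduct_smul, hu, if_pos rfl, smul_eq_mul, mul_one]
    · intro i _ hia; rw [dotProduct_smul, hu, if_neg (Ne.symm hia), smul_eq_mul, mul_zero]
    · intro h; exact absurd (Finset.mem_univ a) h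
  have key : ∀ a b, v a ⬝ᵥ u b = (if a = b then (1 : ℝ) else 0) / σ a := by
    intro a b
    have h1 : u a ⬝ᵥ P.mulVec (P.mulVec (v b)) = u a ⬝ᵥ P.mulVec (v b) := by
      rw [Matrix.mulVec_mulVec, hidem]
    rw [huP, huP, hPv, hv] at h1
    -- h1 : σ a * (v a ⬝ᵥ σ b • u b) = σ a * (if a = b then 1 else 0)
    have h2 : v a ⬝ᵥ σ b • u b = (if a = b then (1 : ℝ) else 0) :=
      mul_left_cancel₀ (hσ a).ne' h1
    rw [dotProduct_smul, smul_eq_mul] at h2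
    by_cases hab : a = b
    · subst hab
      rw [if_pos rfl] at h2 ⊢
      rw [eq_div_iff (hσ a).ne']
      linarith [h2]
    · rw [if_neg hab] at h2 ⊢
      rw [zero_div]
      rcases mul_eq_zero.mp h2 with h | h
      · exact absurd h (hσ b).ne'
      · exact h
  refine ⟨key, fun i => ?_⟩
  have := key i i
  rw [if_pos rfl] at this
  rw [sub_dotProduct, smul_dotProduct, smul_eq_mul, hv, if_pos rfl]
  rw [dotProduct_comm, this]
  rw [mul_one_div, div_self (hσ i).ne', sub_self]
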